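/- Let (Ω,ρ) be a metric space, {Ω_i}_{i∈[m]} a partition of Ω with chosen representatives ω_i ∈ Ω_i, and S ∈ Ω^n with counts n_i = |{j ∈ [n] : S[j] ∈ Ω_i}|. Let μ̄ = Σ_i (n_i/n)·δ_{ω_i}, let μ̃ be any signed measure supported on {ω_1,…,ω_m}, let μ̂ be a minimizer of BL(μ̃, ·) over probability measures supported on {ω_1,…,ω_m}, and let μ be any finitely supported probability measure on Ω with μ(Ω_i) = μ̂({ω_i}) for all i ∈ [m]. Then BL(μ_S, μ) ≤ 2·(max_{i∈[m]} diam(Ω_i) + BL(μ̄, μ̃)). -/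

import Mathlib

open MeasureTheory Real Set

noncomputable section

/-- The class of bounded 1-Lipschitz functions on a metric space. -/
def FBL (Ω : Type*) [PseudoMetricSpace Ω] : Set (Ω → ℝ) :=
  {f | (∀ z, |f z| ≤ Metric.diam (Set.univ : Set Ω)) ∧
       ∀ z1 z2, f z1 - f z2 ≤ dist z1 z2}

/-- Bounded-Lipschitz distance between finitely supported signed measures. -/
def BL2 {Ω : Type*} [PseudoMetricSpace Ω] {n m : ℕ}
    (x : Fin n → Ω) (a : Fin n → ℝ) (y : Fin m → Ω) (b : Fin m → ℝ) : ℝ :=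
  ⨆ f : FBL Ω, ((∑ i, a i * (f : Ω → ℝ) (x i)) - ∑ j, b j * (f : Ω → ℝ) (y j))

/-- probability vector in the simplex Δ_m -/
def probVec {m : ℕ} (b : Fin m → ℝ) : Prop := (∀ j, 0 ≤ b j) ∧ ∑ j, b j = 1

/-!
The empirical measure `μ_S` and the output `μ` are each obtained from a measure on the
representatives (`μ̄`, resp. `μ̂`) by moving every atom inside its cell, which costs at most
`D = max_i diam Ω_i` in BL distance. Hence
`BL(μ_S, μ) ≤ BL(μ_S, μ̄) + BL(μ̄, μ̃) + BL(μ̃, μ̂) + BL(μ̂, μ) ≤ D + BL(μ̄, μ̃) + BL(μ̃, μ̂) + D`,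
and `BL(μ̃, μ̂) ≤ BL(μ̃, μ̄)` because `μ̄` is a competitor in the minimization defining `μ̂`.
-/

section FBL

variable {Ω : Type*} [PseudoMetricSpace Ω]

lemma zero_mem_FBL : (fun _ : Ω => (0 : ℝ)) ∈ FBL Ω :=
  ⟨fun _ => by simp [Metric.diam_nonneg], fun _ _ => by simp⟩

lemma neg_mem_FBL {f : Ω → ℝ} (hf : f ∈ FBL Ω) : (fun z => -f z) ∈ FBL Ω :=
  ⟨fun z => by simpa using hf.1 z, fun z1 z2 => by linarith [hf.2 z2 z1, dist_comm z1 z2]⟩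

instance : Nonempty (FBL Ω) := ⟨⟨_, zero_mem_FBL⟩⟩

/-- For unbounded `s` both sides vanish: then `diam univ = 0`, which forces `FBL Ω = {0}`. -/
lemma sub_le_diam_of_mem_FBL {f : Ω → ℝ} (hf : f ∈ FBL Ω) {s : Set Ω} {z z' : Ω} (hz : z ∈ s)
    (hz' : z' ∈ s) : f z - f z' ≤ Metric.diam s := by
  by_cases hs : Bornology.IsBounded s
  · exact (hf.2 z z').trans (Metric.dist_le_diam_of_mem hs hz hz')
  · have huniv : Metric.diam (univ : Set Ω) = 0 :=
      Metric.diam_eq_zero_of_unbounded fun h => hs (h.subset (subset_univ s))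
    have hzero : ∀ w, f w = 0 := fun w => abs_nonpos_iff.mp (huniv ▸ hf.1 w)
    simp [hzero, Metric.diam_eq_zero_of_unbounded hs]

end FBL

section BL2

variable {Ω : Type*} [PseudoMetricSpace Ω] {n m k : ℕ}
  (x : Fin n → Ω) (a : Fin n → ℝ) (y : Fin m → Ω) (b : Fin m → ℝ)

lemma BL2_bddAbove :
    BddAbove (range fun f : FBL Ω =>
      (∑ i, a i * (f : Ω → ℝ) (x i)) - ∑ j, b j * (f : Ω → ℝ) (y j)) := by
  refine ⟨(∑ i, |a i| + ∑ j, |b j|) * Metric.diam (univ : Set Ω), ?_⟩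
  rintro _ ⟨⟨f, hf⟩, rfl⟩
  have hterm : ∀ (t : ℝ) (z : Ω), |t * f z| ≤ |t| * Metric.diam (univ : Set Ω) := fun t z => by
    rw [abs_mul]; exact mul_le_mul_of_nonneg_left (hf.1 z) (abs_nonneg t)
  have h1 : ∑ i, a i * f (x i) ≤ ∑ i, |a i| * Metric.diam (univ : Set Ω) :=
    Finset.sum_le_sum fun i _ => (le_abs_self _).trans (hterm _ _)
  have h2 : -∑ j, b j * f (y j) ≤ ∑ j, |b j| * Metric.diam (univ : Set Ω) := by
    rw [← Finset.sum_neg_distrib]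
    exact Finset.sum_le_sum fun j _ => (neg_le_abs _).trans (hterm _ _)
  simp only [add_mul, Finset.sum_mul]
  linarith

lemma le_BL2 {f : Ω → ℝ} (hf : f ∈ FBL Ω) :
    (∑ i, a i * f (x i)) - ∑ j, b j * f (y j) ≤ BL2 x a y b :=
  le_ciSup (BL2_bddAbove x a y b) ⟨f, hf⟩

variable {x a y b} in
lemma BL2_le {M : ℝ} (h : ∀ f ∈ FBL Ω, (∑ i, a i * f (x i)) - ∑ j, b j * f (y j) ≤ M) :
    BL2 x a y b ≤ M :=
  ciSup_le fun f => h f.1 f.2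

lemma BL2_comm : BL2 x a y b = BL2 y b x a := by
  have key : ∀ {n m : ℕ} (x : Fin n → Ω) (a : Fin n → ℝ) (y : Fin m → Ω) (b : Fin m → ℝ),
      BL2 x a y b ≤ BL2 y b x a := fun x a y b =>
    BL2_le fun f hf => by
      have h := le_BL2 y b x a (neg_mem_FBL hf)
      simp only [mul_neg, Finset.sum_neg_distrib] at h
      linarith
  exact le_antisymm (key x a y b) (key y b x a)

lemma BL2_triangle (z : Fin k → Ω) (c : Fin k → ℝ) :
    BL2 x a z c ≤ BL2 x a y b + BL2 y b z c :=
  BL2_le fun f hf => by linarith [le_BL2 x a y b hf, le_BL2 y b z c hf]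

lemma BL2_le_sum_mul_of_mem {x' : Fin n → Ω} (ha : ∀ j, 0 ≤ a j) (s : Fin n → Set Ω)
    (hx : ∀ j, x j ∈ s j) (hx' : ∀ j, x' j ∈ s j) {D : ℝ} (hD : ∀ j, Metric.diam (s j) ≤ D) :
    BL2 x a x' a ≤ (∑ j, a j) * D := by
  refine BL2_le fun f hf => ?_
  rw [← Finset.sum_sub_distrib, Finset.sum_mul]
  refine Finset.sum_le_sum fun j _ => ?_
  rw [← mul_sub]
  exact mul_le_mul_of_nonneg_left
    ((sub_le_diam_of_mem_FBL hf (hx j) (hx' j)).trans (hD j)) (ha j)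

end BL2

section Pushforward

variable {n m : ℕ}

def pushforward (q : Fin n → Fin m) (c : Fin n → ℝ) (i : Fin m) : ℝ :=
  ∑ j with q j = i, c j

lemma sum_pushforward_mul (q : Fin n → Fin m) (c : Fin n → ℝ) (g : Fin m → ℝ) :
    ∑ i, pushforward q c i * g i = ∑ j, c j * g (q j) := by
  rw [← Finset.sum_fiberwise Finset.univ q (fun j => c j * g (q j))]
  refine Finset.sum_congr rfl fun i _ => ?_
  rw [pushforward, Finset.sum_mul]
  exact Finset.sum_congr rfl fun j hj => by rw [(Finset.mem_filter.mp hj).2]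

lemma probVec.pushforward {c : Fin n → ℝ} (hc : probVec c) (q : Fin n → Fin m) :
    probVec (pushforward q c) :=
  ⟨fun _ => Finset.sum_nonneg fun j _ => hc.1 j, by
    simpa [hc.2] using sum_pushforward_mul q c (fun _ => 1)⟩

variable {Ω : Type*} [PseudoMetricSpace Ω] {k : ℕ}

lemma BL2_pushforward_left (q : Fin n → Fin m) (ω : Fin m → Ω) (c : Fin n → ℝ)
    (y : Fin k → Ω) (b : Fin k → ℝ) :
    BL2 ω (pushforward q c) y b = BL2 (fun j => ω (q j)) c y b := by
  simp only [BL2, sum_pushforward_mul]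

lemma BL2_pushforward_right (x : Fin k → Ω) (a : Fin k → ℝ) (q : Fin n → Fin m)
    (ω : Fin m → Ω) (c : Fin n → ℝ) :
    BL2 x a ω (pushforward q c) = BL2 x a (fun j => ω (q j)) c := by
  simp only [BL2, sum_pushforward_mul]

end Pushforward

lemma probVec_const_inv {n : ℕ} (hn : 0 < n) : probVec (fun _ : Fin n => (n : ℝ)⁻¹) :=
  ⟨fun _ => by positivity, by simp [hn.ne']⟩

theorem psmm_deterministic_bound_general
    {Ω : Type*} [MetricSpace Ω] {m n K : ℕ} (hn : 0 < n)
    (P : Fin m → Set Ω) (hdisj : Pairwise (Function.onFun Disjoint P))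
    (hcover : ⋃ i, P i = Set.univ)
    (ω : Fin m → Ω) (hω : ∀ i, ω i ∈ P i)
    (S : Fin n → Ω)
    (μbar : Fin m → ℝ)
    (hμbar : ∀ i, μbar i = (Nat.card {j : Fin n // S j ∈ P i} : ℝ) / n)
    (μt : Fin m → ℝ)
    (μh : Fin m → ℝ)
    (hμh : probVec μh ∧ ∀ ν : Fin m → ℝ, probVec ν → BL2 ω μt ω μh ≤ BL2 ω μt ω ν)
    (y : Fin K → Ω) (c : Fin K → ℝ) (hc : probVec c)
    (hmatch : ∀ i, ∑ j, (P i).indicator (fun _ => c j) (y j) = μh i) :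
    BL2 S (fun _ => (n : ℝ)⁻¹) y c
      ≤ 2 * ((⨆ i, Metric.diam (P i)) + BL2 ω μbar ω μt) := by
  classical
  let cells : IndexedPartition P := IndexedPartition.mk' P hdisj (fun i => ⟨ω i, hω i⟩)
    fun z => mem_iUnion.mp (hcover ▸ mem_univ z)
  set D := ⨆ i, Metric.diam (P i)
  have hdiam : ∀ i, Metric.diam (P i) ≤ D := le_ciSup (finite_range _).bddAbove
  have hμbar_push : μbar = pushforward (cells.index ∘ S) (fun _ => (n : ℝ)⁻¹) := by
    ext i
    simp [hμbar, pushforward, Nat.card_eq_fintype_card, Fintype.card_subtype,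
      cells.mem_iff_index_eq, div_eq_mul_inv]
  have hμh_push : μh = pushforward (cells.index ∘ y) c := by
    ext i
    simp [← hmatch, pushforward, indicator_apply, cells.mem_iff_index_eq, Finset.sum_filter]
  have hempirical : BL2 S (fun _ => (n : ℝ)⁻¹) ω μbar ≤ D := by
    rw [hμbar_push, BL2_pushforward_right]
    simpa [(probVec_const_inv hn).2] using BL2_le_sum_mul_of_mem _ _ (probVec_const_inv hn).1
      (fun j => P (cells.index (S j))) (fun j => cells.mem_index _) (fun j => hω _) (fun j => hdiam _)
  have hmatched : BL2 ω μh y c ≤ D := by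
    rw [hμh_push, BL2_pushforward_left]
    simpa [hc.2] using BL2_le_sum_mul_of_mem _ _ hc.1 (fun j => P (cells.index (y j)))
      (fun j => hω _) (fun j => cells.mem_index _) (fun j => hdiam _)
  have hminimal : BL2 ω μt ω μh ≤ BL2 ω μbar ω μt :=
    (hμh.2 μbar (hμbar_push ▸ (probVec_const_inv hn).pushforward _)).trans_eq (BL2_comm _ _ _ _)
  linarith [BL2_triangle S (fun _ => (n : ℝ)⁻¹) ω μbar y c, BL2_triangle ω μbar ω μt y c,
    BL2_triangle ω μt ω μh y c]

/-- Deterministic part of the PSMM analysis: the output measure is within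
2(max_i diam Ω_i + BL(μ̄, μ̃)) of the empirical measure in BL distance. -/
theorem psmm_deterministic_bound
    {Ω : Type*} [MetricSpace Ω] {m n K : ℕ} (hm : 0 < m) (hn : 0 < n)
    (P : Fin m → Set Ω) (hdisj : Pairwise (Function.onFun Disjoint P))
    (hcover : ⋃ i, P i = Set.univ)
    (ω : Fin m → Ω) (hω : ∀ i, ω i ∈ P i)
    (S : Fin n → Ω)
    (μbar : Fin m → ℝ)
    (hμbar : ∀ i, μbar i = (Nat.card {j : Fin n // S j ∈ P i} : ℝ) / n)
    (μt : Fin m → ℝ)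
    (μh : Fin m → ℝ)
    (hμh : probVec μh ∧ ∀ ν : Fin m → ℝ, probVec ν → BL2 ω μt ω μh ≤ BL2 ω μt ω ν)
    (y : Fin K → Ω) (c : Fin K → ℝ) (hc : probVec c)
    (hmatch : ∀ i, ∑ j, (P i).indicator (fun _ => c j) (y j) = μh i) :
    BL2 S (fun _ => (n : ℝ)⁻¹) y c
      ≤ 2 * ((⨆ i, Metric.diam (P i)) + BL2 ω μbar ω μt) :=
  psmm_deterministic_bound_general hn P hdisj hcover ω hω S μbar hμbar μt μh hμh y c hc hmatch

end
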